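/- arXiv:2602.23271 — 2 statements merged into one kernel-verified Lean document; each statement's English description precedes it below -/
import Mathlib

section
/- Let X be a random vector on a probability space taking values almost surely in the set {e₁, …, e_K} of standard basis vectors of ℝ^K (a one-hot encoded categorical random variable), and let X₁, X₂ be independent and identically distributed copies of X. Then the total variance of X equals the probability that two independent runs disagree: TV(X) = Tr(Σ) = P(X₁ ≠ X₂). -/
/-!
For any square-integrable random vector, `E‖X₁ - X₂‖² = 2 TV(X)`: coordinatewise,
`X₁ k - X₂ k` is centred and its variance is `2 Var(X k)` by independence. Distinct standard basis
vectors are at squared distance `2`, so for one-hot vectors `‖X₁ - X₂‖² = 2 · 1[X₁ ≠ X₂]`, and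
taking expectations gives `TV(X) = P(X₁ ≠ X₂)`.
-/

open MeasureTheory ProbabilityTheory

section

variable {Ω : Type*} [MeasurableSpace Ω] {μ : Measure Ω} [IsProbabilityMeasure μ]

theorem integral_sub_sq_eq_two_mul_variance {Y Y₁ Y₂ : Ω → ℝ} (hY : MemLp Y 2 μ)
    (hindep : IndepFun Y₁ Y₂ μ) (h₁ : IdentDistrib Y₁ Y μ μ) (h₂ : IdentDistrib Y₂ Y μ μ) :
    ∫ ω, (Y₁ ω - Y₂ ω) ^ 2 ∂μ = 2 * Var[Y; μ] := by
  have hY₁ : MemLp Y₁ 2 μ := h₁.memLp_iff.2 hY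
  have hY₂ : MemLp Y₂ 2 μ := h₂.memLp_iff.2 hY
  have hmean : μ[Y₁ - Y₂] = 0 := by
    rw [Pi.sub_def, integral_sub (hY₁.integrable one_le_two) (hY₂.integrable one_le_two),
      h₁.integral_eq, h₂.integral_eq, sub_self]
  have hvar := variance_eq_sub (hY₁.sub hY₂)
  rw [variance_sub hY₁ hY₂, hindep.covariance_eq_zero hY₁ hY₂, hmean, h₁.variance_eq,
    h₂.variance_eq] at hvar
  simp only [Pi.sub_apply, Pi.pow_apply] at hvar
  linarith

theorem integral_norm_sub_sq_eq_two_mul_sum_variance {ι : Type*} [Fintype ι]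
    {X X₁ X₂ : Ω → EuclideanSpace ℝ ι} (hX : MemLp X 2 μ)
    (hindep : IndepFun X₁ X₂ μ) (h₁ : IdentDistrib X₁ X μ μ) (h₂ : IdentDistrib X₂ X μ μ) :
    ∫ ω, ‖X₁ ω - X₂ ω‖ ^ 2 ∂μ = 2 * ∑ i, Var[fun ω ↦ X ω i; μ] := by
  have hproj (i : ι) : Measurable fun v : EuclideanSpace ℝ ι ↦ v i := by fun_prop
  have hcoord (i : ι) := integral_sub_sq_eq_two_mul_variance (hX.eval_piLp i)
    (hindep.comp (hproj i) (hproj i)) (h₁.comp (hproj i)) (h₂.comp (hproj i))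
  have hint (i : ι) : Integrable (fun ω ↦ (X₁ ω i - X₂ ω i) ^ 2) μ :=
    (((h₁.memLp_iff.2 hX).eval_piLp i).sub ((h₂.memLp_iff.2 hX).eval_piLp i)).integrable_sq
  calc ∫ ω, ‖X₁ ω - X₂ ω‖ ^ 2 ∂μ = ∫ ω, ∑ i, (X₁ ω i - X₂ ω i) ^ 2 ∂μ := by
        simp [EuclideanSpace.norm_sq_eq]
    _ = ∑ i, ∫ ω, (X₁ ω i - X₂ ω i) ^ 2 ∂μ := integral_finsetSum _ fun i _ ↦ hint i
    _ = 2 * ∑ i, Var[fun ω ↦ X ω i; μ] := by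
        rw [Finset.mul_sum]
        exact Finset.sum_congr rfl fun i _ ↦ hcoord i

end

theorem EuclideanSpace.norm_sub_sq_of_mem_range_single {ι : Type*} [Fintype ι] [DecidableEq ι]
    {u v : EuclideanSpace ℝ ι} (hu : u ∈ Set.range fun i ↦ EuclideanSpace.single i (1 : ℝ))
    (hv : v ∈ Set.range fun i ↦ EuclideanSpace.single i (1 : ℝ)) :
    ‖u - v‖ ^ 2 = if u = v then 0 else 2 := by
  obtain ⟨i, rfl⟩ := hu
  obtain ⟨j, rfl⟩ := hv
  split_ifs with h
  · simp [h]
  · have hij : i ≠ j := by rintro rfl; exact h rfl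
    norm_num [norm_sub_sq_real, EuclideanSpace.inner_single_left, hij]

theorem stmt_3_general {Ω : Type*} [MeasurableSpace Ω] {μ : Measure Ω} [IsProbabilityMeasure μ]
    {K : ℕ} (X X₁ X₂ : Ω → EuclideanSpace ℝ (Fin K))
    (honehot : ∀ᵐ ω ∂μ, ∃ k : Fin K, X ω = EuclideanSpace.single k 1)
    (hindep : IndepFun X₁ X₂ μ)
    (hid1 : IdentDistrib X₁ X μ μ) (hid2 : IdentDistrib X₂ X μ μ) :
    ∑ k : Fin K, ∫ ω, (X ω k - ∫ ω', X ω' k ∂μ) ^ 2 ∂μ =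
      (μ {ω | X₁ ω ≠ X₂ ω}).toReal := by
  set S := Set.range fun k : Fin K ↦ EuclideanSpace.single k (1 : ℝ)
  have hS : MeasurableSet S := (Set.finite_range _).measurableSet
  have hX : ∀ᵐ ω ∂μ, X ω ∈ S := by simpa [S, eq_comm] using honehot
  have hX₁ := hid1.symm.ae_mem_snd hS hX
  have hX₂ := hid2.symm.ae_mem_snd hS hX
  have hXL2 : MemLp X 2 μ := MemLp.of_bound hid1.aemeasurable_snd.aestronglyMeasurable 1 <| by
    filter_upwards [hX] with ω ⟨k, hk⟩
    simp [← hk]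
  have hdist : (fun ω ↦ ‖X₁ ω - X₂ ω‖ ^ 2) =ᵐ[μ] {ω | X₁ ω ≠ X₂ ω}.indicator fun _ ↦ 2 := by
    filter_upwards [hX₁, hX₂] with ω h₁ h₂
    rw [EuclideanSpace.norm_sub_sq_of_mem_range_single h₁ h₂]
    by_cases h : X₁ ω = X₂ ω <;> simp [h]
  have hne : NullMeasurableSet {ω | X₁ ω ≠ X₂ ω} μ :=
    (nullMeasurableSet_eq_fun hid1.aemeasurable_fst hid2.aemeasurable_fst).compl
  calc ∑ k, ∫ ω, (X ω k - ∫ ω', X ω' k ∂μ) ^ 2 ∂μ = ∑ k, Var[fun ω ↦ X ω k; μ] := by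
        simp only [variance_eq_integral (hXL2.eval_piLp _).aemeasurable]
    _ = (∫ ω, ‖X₁ ω - X₂ ω‖ ^ 2 ∂μ) / 2 := by
        rw [integral_norm_sub_sq_eq_two_mul_sum_variance hXL2 hindep hid1 hid2]; ring
    _ = (μ {ω | X₁ ω ≠ X₂ ω}).toReal := by
        rw [integral_congr_ae hdist, integral_indicator₀ hne, setIntegral_const]
        simp [measureReal_def]

/-- If a random vector `X` takes values almost surely in the set of
standard basis vectors of `ℝ^K` (one-hot encoding) and `X₁, X₂` are i.i.d. copies of `X`,
then `TV(X) = Tr(Σ) = P(X₁ ≠ X₂)`. -/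
theorem stmt_3 {Ω : Type*} [MeasurableSpace Ω] {μ : Measure Ω} [IsProbabilityMeasure μ]
    {K : ℕ} (X X₁ X₂ : Ω → EuclideanSpace ℝ (Fin K))
    (hXm : Measurable X) (hX₁m : Measurable X₁) (hX₂m : Measurable X₂)
    (honehot : ∀ᵐ ω ∂μ, ∃ k : Fin K, X ω = EuclideanSpace.single k 1)
    (hindep : IndepFun X₁ X₂ μ)
    (hid1 : IdentDistrib X₁ X μ μ) (hid2 : IdentDistrib X₂ X μ μ) :
    ∑ k : Fin K, ∫ ω, (X ω k - ∫ ω', X ω' k ∂μ) ^ 2 ∂μ =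
      (μ {ω | X₁ ω ≠ X₂ ω}).toReal :=
  stmt_3_general X X₁ X₂ honehot hindep hid1 hid2
end

section
/- Fix a positive integer k ≤ K, and let S be a random nonempty subset of {1, …, K} with |S| = k almost surely, defined on a probability space. Let X = ũ_S be the ℓ₂-normalized indicator vector of S in ℝ^K, and let S₁, S₂ be independent and identically distributed copies of S. Then the total variance satisfies TV(X) = Tr(Σ) = 1 − E[|S₁ ∩ S₂|]/k; equivalently, 1 − TV(X) equals the expected fraction of the k items of one run that recur in an independent run. -/
/-!
Coordinatewise, `Var(X j) = E[X j ^ 2] - (E[X j])²`, so the total variance of `X = ũ_S` is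
`E‖X‖² - ‖E X‖²`. Since `|S| = k ≥ 1` almost surely, `‖X‖ = 1` almost surely. For independent
copies `X₁ = ũ_{S₁}` and `X₂ = ũ_{S₂}` with the same mean as `X`, independence gives
`‖E X‖² = ⟪E X₁, E X₂⟫ = E⟪X₁, X₂⟫`, and `⟪ũ_{S₁}, ũ_{S₂}⟫ = |S₁ ∩ S₂| / k`.
-/

open MeasureTheory ProbabilityTheory

/-- Measurable space structure on finite sets of indices (discrete σ-algebra). -/
instance finsetMeasurableSpace {α : Type*} : MeasurableSpace (Finset α) := ⊤

/-- The ℓ₂-normalized indicator vector of a finite set `S ⊆ {1, …, K}`: the vector in `ℝ^K`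
whose `k`-th entry is `1/√|S|` if `k ∈ S` and `0` otherwise. -/
noncomputable def normInd {K : ℕ} (S : Finset (Fin K)) : EuclideanSpace ℝ (Fin K) :=
  WithLp.toLp 2 (fun k => if k ∈ S then 1 / Real.sqrt S.card else 0)

open Finset RealInnerProductSpace

theorem inner_normInd {K : ℕ} (S T : Finset (Fin K)) :
    ⟪normInd S, normInd T⟫ = #(S ∩ T) / (√(#S) * √(#T)) := by
  simp only [normInd, PiLp.inner_apply, RCLike.inner_apply, conj_trivial, ite_zero_mul_ite_zero,
    ← mem_inter, sum_ite_mem, univ_inter, sum_const, nsmul_eq_mul, inter_comm T S]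
  field_simp

theorem inner_normInd_of_card_eq {K k : ℕ} {S T : Finset (Fin K)} (hS : #S = k) (hT : #T = k) :
    ⟪normInd S, normInd T⟫ = #(S ∩ T) / k := by
  rw [inner_normInd, hS, hT, Real.mul_self_sqrt (Nat.cast_nonneg _)]

theorem norm_normInd_le_one {K : ℕ} (S : Finset (Fin K)) : ‖normInd S‖ ≤ 1 := by
  have h := inner_normInd S S
  rw [real_inner_self_eq_norm_sq, inter_self, Real.mul_self_sqrt (Nat.cast_nonneg _)] at h
  exact (pow_le_one_iff_of_nonneg (norm_nonneg _) two_ne_zero).1 (h ▸ div_self_le_one _)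

theorem norm_normInd_sq_of_card_eq {K k : ℕ} {S : Finset (Fin K)} (hk : k ≠ 0) (hS : #S = k) :
    ‖normInd S‖ ^ 2 = 1 := by
  rw [← real_inner_self_eq_norm_sq, inner_normInd_of_card_eq hS hS, inter_self, hS]
  exact div_self (Nat.cast_ne_zero.2 hk)

section

variable {Ω ι : Type*} [MeasurableSpace Ω] {μ : Measure Ω} [Fintype ι]

theorem integral_sub_integral_sq [IsProbabilityMeasure μ] {X : Ω → ℝ} (hX : MemLp X 2 μ) :
    ∫ ω, (X ω - ∫ ω', X ω' ∂μ) ^ 2 ∂μ = ∫ ω, X ω ^ 2 ∂μ - (∫ ω, X ω ∂μ) ^ 2 := by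
  rw [← variance_eq_integral hX.aemeasurable, variance_eq_sub hX]
  rfl

theorem sum_integral_sub_integral_sq [IsProbabilityMeasure μ] {X : Ω → EuclideanSpace ℝ ι}
    (hX : MemLp X 2 μ) :
    ∑ i, ∫ ω, (X ω i - ∫ ω', X ω' i ∂μ) ^ 2 ∂μ = ∫ ω, ‖X ω‖ ^ 2 ∂μ - ‖∫ ω, X ω ∂μ‖ ^ 2 := by
  have hXi := hX.eval_piLp
  simp only [EuclideanSpace.norm_sq_eq, Real.norm_eq_abs, sq_abs,
    eval_integral_piLp (hX.integrable one_le_two).eval_piLp, integral_sub_integral_sq (hXi _)]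
  rw [integral_finsetSum _ fun i _ ↦ (hXi i).integrable_sq, sum_sub_distrib]

theorem ProbabilityTheory.IndepFun.integral_inner_eq {X Y : Ω → EuclideanSpace ℝ ι}
    (hXY : IndepFun X Y μ) (hX : Integrable X μ) (hY : Integrable Y μ) :
    ∫ ω, ⟪X ω, Y ω⟫ ∂μ = ⟪∫ ω, X ω ∂μ, ∫ ω, Y ω ∂μ⟫ := by
  have hXi := hX.eval_piLp
  have hYi := hY.eval_piLp
  have hYXi (i : ι) : IndepFun (fun ω ↦ Y ω i) (fun ω ↦ X ω i) μ :=
    hXY.symm.comp (EuclideanSpace.proj i).continuous.measurable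
      (EuclideanSpace.proj i).continuous.measurable
  simp only [PiLp.inner_apply, RCLike.inner_apply, conj_trivial, eval_integral_piLp hXi,
    eval_integral_piLp hYi]
  rw [integral_finsetSum _ fun i _ ↦ ?_]
  · exact sum_congr rfl fun i _ ↦ (hYXi i).integral_fun_mul_eq_mul_integral
      (hYi i).aestronglyMeasurable (hXi i).aestronglyMeasurable
  · exact (hYXi i).integrable_mul (hYi i) (hXi i)

theorem memLp_normInd_comp [IsFiniteMeasure μ] {K : ℕ} {S : Ω → Finset (Fin K)}
    (hS : AEMeasurable S μ) (p : ENNReal) : MemLp (fun ω ↦ normInd (S ω)) p μ :=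
  .of_bound (measurable_from_top (f := normInd).comp_aemeasurable hS).aestronglyMeasurable 1
    (ae_of_all _ fun ω ↦ norm_normInd_le_one (S ω))

end

theorem stmt_9_general {Ω : Type*} [MeasurableSpace Ω] {μ : Measure Ω} [IsProbabilityMeasure μ]
    {K k : ℕ} (hk : 1 ≤ k)
    (S S₁ S₂ : Ω → Finset (Fin K))
    (hcard : ∀ᵐ ω ∂μ, (S ω).card = k)
    (hindep : IndepFun S₁ S₂ μ)
    (hid1 : IdentDistrib S₁ S μ μ) (hid2 : IdentDistrib S₂ S μ μ) :
    ∑ j : Fin K, ∫ ω, (normInd (S ω) j - ∫ ω', normInd (S ω') j ∂μ) ^ 2 ∂μ =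
      1 - (∫ ω, ((S₁ ω ∩ S₂ ω).card : ℝ) ∂μ) / (k : ℝ) := by
  have hmeas : Measurable (normInd (K := K)) := measurable_from_top
  have hmean₁ : ∫ ω, normInd (S₁ ω) ∂μ = ∫ ω, normInd (S ω) ∂μ := (hid1.comp hmeas).integral_eq
  have hmean₂ : ∫ ω, normInd (S₂ ω) ∂μ = ∫ ω, normInd (S ω) ∂μ := (hid2.comp hmeas).integral_eq
  have hcard₁ : ∀ᵐ ω ∂μ, #(S₁ ω) = k :=
    hid1.symm.ae_snd (p := fun T ↦ #T = k) MeasurableSpace.measurableSet_top hcard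
  have hcard₂ : ∀ᵐ ω ∂μ, #(S₂ ω) = k :=
    hid2.symm.ae_snd (p := fun T ↦ #T = k) MeasurableSpace.measurableSet_top hcard
  have hindepX : IndepFun (fun ω ↦ normInd (S₁ ω)) (fun ω ↦ normInd (S₂ ω)) μ :=
    hindep.comp hmeas hmeas
  have hnorm : ∫ ω, ‖normInd (S ω)‖ ^ 2 ∂μ = 1 := by
    rw [integral_congr_ae (hcard.mono fun ω h ↦ norm_normInd_sq_of_card_eq (by omega) h)]
    simp
  have hoverlap : (∫ ω, (#(S₁ ω ∩ S₂ ω) : ℝ) ∂μ) / k = ‖∫ ω, normInd (S ω) ∂μ‖ ^ 2 := by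
    rw [← integral_div, ← integral_congr_ae ((hcard₁.and hcard₂).mono fun ω h ↦
        inner_normInd_of_card_eq h.1 h.2),
      hindepX.integral_inner_eq ((memLp_normInd_comp hid1.aemeasurable_fst 1).integrable le_rfl)
        ((memLp_normInd_comp hid2.aemeasurable_fst 1).integrable le_rfl),
      hmean₁, hmean₂, real_inner_self_eq_norm_sq]
  rw [sum_integral_sub_integral_sq (memLp_normInd_comp hid1.aemeasurable_snd 2), hnorm, hoverlap]

/-- Let `S` be a random nonempty subset of `{1, …, K}` with `|S| = k` a.s.
(`1 ≤ k ≤ K`), let `X = ũ_S` be its ℓ₂-normalized indicator vector, and let `S₁, S₂` be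
i.i.d. copies of `S`. Then `TV(X) = Tr(Σ) = 1 − E[|S₁ ∩ S₂|]/k`. -/
theorem stmt_9 {Ω : Type*} [MeasurableSpace Ω] {μ : Measure Ω} [IsProbabilityMeasure μ]
    {K k : ℕ} (hk : 1 ≤ k) (hkK : k ≤ K)
    (S S₁ S₂ : Ω → Finset (Fin K))
    (hSm : Measurable S) (hS₁m : Measurable S₁) (hS₂m : Measurable S₂)
    (hcard : ∀ᵐ ω ∂μ, (S ω).card = k)
    (hindep : IndepFun S₁ S₂ μ)
    (hid1 : IdentDistrib S₁ S μ μ) (hid2 : IdentDistrib S₂ S μ μ) :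
    ∑ j : Fin K, ∫ ω, (normInd (S ω) j - ∫ ω', normInd (S ω') j ∂μ) ^ 2 ∂μ =
      1 - (∫ ω, ((S₁ ω ∩ S₂ ω).card : ℝ) ∂μ) / (k : ℝ) :=
  stmt_9_general hk S S₁ S₂ hcard hindep hid1 hid2
end
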